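/- Let Λ be a rank-2 lattice in ℝ³ whose fundamental parallelogram has area d², and suppose every nonzero vector of Λ has squared length divisible by d². Then Λ contains a vector of length exactly d. -/

import Mathlib

/-!
Writing `‖u‖² = d² a`, `2 u·w = d² b`, `‖w‖² = d² c` with `a, b, c ∈ ℤ`, Lagrange's identity
`‖u × w‖² = ‖u‖²‖w‖² - (u·w)²` turns the area condition into `b² - 4ac = -4`. A positive
definite integral binary form of discriminant `-4` represents `1` (Gauss reduction brings it
down to `x² + y²`), and a representation `a m² + b m n + c n² = 1` is exactly
`‖m u + n w‖² = d²`.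
-/

def dotR (a b : Fin 3 → ℝ) : ℝ := a 0 * b 0 + a 1 * b 1 + a 2 * b 2

def crossR (a b : Fin 3 → ℝ) : Fin 3 → ℝ :=
  ![a 1 * b 2 - a 2 * b 1, a 2 * b 0 - a 0 * b 2, a 0 * b 1 - a 1 * b 0]

lemma dotR_eq_dotProduct (a b : Fin 3 → ℝ) : dotR a b = a ⬝ᵥ b := by
  simp [dotR, dotProduct, Fin.sum_univ_three]

lemma crossR_eq_crossProduct (a b : Fin 3 → ℝ) : crossR a b = crossProduct a b :=
  (cross_apply a b).symm

lemma dotR_self_nonneg (a : Fin 3 → ℝ) : 0 ≤ dotR a a :=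
  add_nonneg (add_nonneg (mul_self_nonneg _) (mul_self_nonneg _)) (mul_self_nonneg _)

lemma dotR_crossR_self (u w : Fin 3 → ℝ) :
    dotR (crossR u w) (crossR u w) = dotR u u * dotR w w - dotR u w ^ 2 := by
  simp only [dotR_eq_dotProduct, crossR_eq_crossProduct, cross_dot_cross, dotProduct_comm w u, sq]

lemma dotR_zsmul_add_zsmul_self (m n : ℤ) (u w : Fin 3 → ℝ) :
    dotR (m • u + n • w) (m • u + n • w) =
      m ^ 2 * dotR u u + 2 * m * n * dotR u w + n ^ 2 * dotR w w := by
  simp only [dotR, Pi.add_apply, zsmul_eq_mul, Pi.mul_apply, Pi.intCast_apply]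
  ring

lemma exists_abs_two_mul_mul_add_le (a b : ℤ) (ha : 0 < a) : ∃ t : ℤ, |2 * a * t + b| ≤ a := by
  refine ⟨-((b + a) / (2 * a)), abs_le.2 ⟨?_, ?_⟩⟩ <;>
  · have := Int.emod_add_mul_ediv (b + a) (2 * a)
    have := Int.emod_nonneg (b + a) (by omega : 2 * a ≠ 0)
    have := Int.emod_lt_of_pos (b + a) (by omega : 0 < 2 * a)
    linarith

/-- Gauss reduction: the substitution `(m, n) ↦ (t m + n, m)` with `|2 a t + b| ≤ a` turns the
form into one whose leading coefficient lies strictly between `0` and `a`, unless `a = 1`. -/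
theorem exists_binaryForm_eq_one_of_disc_eq_neg_four (a : ℤ) (ha : 0 < a) :
    ∀ b c : ℤ, b ^ 2 - 4 * a * c = -4 → ∃ m n : ℤ, a * m ^ 2 + b * m * n + c * n ^ 2 = 1 := by
  induction a using Int.strongRec (m := 1) with
  | lt a h => omega
  | ge a h1 ih =>
    intro b c hdisc
    obtain rfl | h2 := h1.eq_or_lt
    · exact ⟨1, 0, by ring⟩
    obtain ⟨t, ht⟩ := exists_abs_two_mul_mul_add_le a b ha
    set s := 2 * a * t + b
    set a' := a * t ^ 2 + b * t + c
    have hs : s ^ 2 ≤ a ^ 2 := sq_le_sq' (abs_le.1 ht).1 (abs_le.1 ht).2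
    have hdisc' : s ^ 2 - 4 * a' * a = -4 := by linear_combination hdisc
    -- `4 a a' = s² + 4 ≤ a² + 4 < 4 a²`
    have ha'_pos : 0 < a' := by nlinarith
    obtain ⟨m, n, hmn⟩ := ih a' (by nlinarith) ha'_pos s a hdisc'
    exact ⟨t * m + n, m, by linear_combination hmn⟩

lemma exists_binaryForm_eq_of_det_eq_sq {D A B C : ℝ} (hD : 0 < D) (hA : 0 ≤ A)
    (hdet : A * C - B ^ 2 = D ^ 2) {a b c : ℤ} (ha : A = D * a) (hb : 2 * B = D * b)
    (hc : C = D * c) : ∃ m n : ℤ, m ^ 2 * A + 2 * m * n * B + n ^ 2 * C = D := by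
  have hdisc : b ^ 2 - 4 * a * c = -4 := by
    have : D ^ 2 * ((b ^ 2 - 4 * a * c : ℤ) : ℝ) = D ^ 2 * (-4 : ℤ) := by
      push_cast; linear_combination (-4) * hdet + 4 * C * ha + 4 * D * a * hc - (2 * B + D * b) * hb
    exact_mod_cast mul_left_cancel₀ (by positivity) this
  have ha_pos : 0 < a := by
    have : 0 ≤ a := by exact_mod_cast nonneg_of_mul_nonneg_right (ha ▸ hA) hD
    have : a ≠ 0 := by rintro rfl; nlinarith
    omega
  obtain ⟨m, n, hmn⟩ := exists_binaryForm_eq_one_of_disc_eq_neg_four a ha_pos b c hdisc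
  refine ⟨m, n, ?_⟩
  have hmn : (a * m ^ 2 + b * m * n + c * n ^ 2 : ℝ) = 1 := by exact_mod_cast hmn
  linear_combination m ^ 2 * ha + m * n * hb + n ^ 2 * hc + D * hmn

theorem planar_lattice_short_vector_general (d : ℕ) (hd : 0 < d) (u w : Fin 3 → ℝ)
    (harea : dotR (crossR u w) (crossR u w) = (d : ℝ)^4)
    (hdiv : ∀ m n : ℤ, ¬(m = 0 ∧ n = 0) →
      ∃ k : ℤ, dotR (m • u + n • w) (m • u + n • w) = (d : ℝ)^2 * k) :
    ∃ m n : ℤ, dotR (m • u + n • w) (m • u + n • w) = (d : ℝ)^2 := by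
  obtain ⟨a, ha⟩ := hdiv 1 0 (by simp)
  obtain ⟨c, hc⟩ := hdiv 0 1 (by simp)
  obtain ⟨e, he⟩ := hdiv 1 1 (by simp)
  rw [dotR_zsmul_add_zsmul_self] at ha hc he
  norm_num at ha hc he
  have hb : 2 * dotR u w = (d : ℝ) ^ 2 * (e - a - c : ℤ) := by
    push_cast; linear_combination he - ha - hc
  have hdet : dotR u u * dotR w w - dotR u w ^ 2 = ((d : ℝ) ^ 2) ^ 2 := by
    rw [← dotR_crossR_self, harea]; ring
  obtain ⟨m, n, hmn⟩ := exists_binaryForm_eq_of_det_eq_sq (by positivity)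
    (dotR_self_nonneg u) hdet ha hb hc
  exact ⟨m, n, by rw [dotR_zsmul_add_zsmul_self, hmn]⟩

/-- A rank-2 lattice in `ℝ³` with fundamental parallelogram of area `d²`, all of
whose nonzero vectors have squared length divisible by `d²`, contains a vector of
length exactly `d`. (The lattice is `ℤu + ℤw`; the area is `‖u × w‖`.) -/
theorem planar_lattice_short_vector (d : ℕ) (hd : 0 < d) (u w : Fin 3 → ℝ)
    (hind : LinearIndependent ℝ ![u, w])
    (harea : dotR (crossR u w) (crossR u w) = (d : ℝ)^4)
    (hdiv : ∀ m n : ℤ, ¬(m = 0 ∧ n = 0) →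
      ∃ k : ℤ, dotR (m • u + n • w) (m • u + n • w) = (d : ℝ)^2 * k) :
    ∃ m n : ℤ, dotR (m • u + n • w) (m • u + n • w) = (d : ℝ)^2 :=
  planar_lattice_short_vector_general d hd u w harea hdiv
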